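/- Let η > 0 and c₁₀, c₀₁ ∈ ℝ. Let C : ℝ → M₃(ℝ) take symmetric positive definite values, and let Cᵢ : ℝ → M₃(ℝ) be differentiable with Cᵢ(t) invertible for all t, satisfying the evolution equation Cᵢ'(t) = (1/η)·(c₁₀·C̄(t)·Cᵢ(t)⁻¹ − c₀₁·Cᵢ(t)·C̄(t)⁻¹)^D·Cᵢ(t) for all t, where C̄(t) := (det C(t))^{-1/3}·C(t). If det Cᵢ(0) = 1, then det Cᵢ(t) = 1 for all t. That is, the exact flow of the multiplicative Maxwell model preserves inelastic incompressibility. -/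

import Mathlib

/-!
Jacobi's formula along a curve: if `A' = G A`, then `(det A)' = tr G · det A`, because
differentiating the Leibniz expansion row by row replaces each row of `A` by the corresponding
row of `G A`, a combination of the rows of `A` whose only surviving contribution to the
determinant is `G i i • A i`. The Maxwell flow has this form with `G` a multiple of a
deviatoric matrix, so `tr G = 0` and `det Cᵢ` is constant.
-/

open Matrix

abbrev Mat := Matrix (Fin 3) (Fin 3) ℝ

attribute [local instance] Matrix.frobeniusNormedAddCommGroup Matrix.frobeniusNormedSpace

/-- The unimodular part of a matrix. -/
noncomputable def unimod (M : Mat) : Mat := (M.det ^ (-(1 : ℝ) / 3)) • M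

/-- The deviatoric part of a matrix. -/
noncomputable def dev (M : Mat) : Mat := M - (M.trace / 3) • (1 : Mat)

/-- The right-hand side of the Maxwell flow rule for the Mooney–Rivlin potential. -/
noncomputable def maxwellRHS (η c10 c01 : ℝ) (C Ci : Mat) : Mat :=
  (1 / η) • (dev (c10 • (unimod C * Ci⁻¹) - c01 • (Ci * (unimod C)⁻¹)) * Ci)

open Finset Equiv

section Jacobi

variable {n : Type*} [Fintype n]

lemma HasDerivAt.matrix_apply {A : ℝ → Matrix n n ℝ} {A' : Matrix n n ℝ} {t : ℝ}
    (h : HasDerivAt A A' t) (i j : n) : HasDerivAt (fun s => A s i j) (A' i j) t :=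
  (LinearMap.toContinuousLinearMap (entryLinearMap ℝ ℝ i j)).hasFDerivAt.comp_hasDerivAt t h

variable [DecidableEq n]

lemma Matrix.det_eq_sum_perm_prod_row {R : Type*} [CommRing R] (M : Matrix n n R) :
    M.det = ∑ σ : Perm n, Perm.sign σ • ∏ i, M i (σ i) := by
  rw [← det_transpose, det_apply]
  rfl

lemma Matrix.det_updateRow_eq_sum {R : Type*} [CommRing R] (M : Matrix n n R) (i : n)
    (v : n → R) :
    (M.updateRow i v).det =
      ∑ σ : Perm n, Perm.sign σ • ((∏ j ∈ univ.erase i, M j (σ j)) * v (σ i)) := by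
  rw [det_eq_sum_perm_prod_row]
  refine sum_congr rfl fun σ _ => ?_
  rw [← prod_erase_mul _ _ (mem_univ i), updateRow_self]
  congr 2
  exact prod_congr rfl fun j hj => by rw [updateRow_ne (ne_of_mem_erase hj)]

lemma Matrix.sum_det_updateRow_mul {R : Type*} [CommRing R] (G M : Matrix n n R) :
    ∑ i, (M.updateRow i ((G * M) i)).det = G.trace * M.det := by
  have hrow : ∀ i, (G * M) i = ∑ k, G i k • M k := fun i => by
    ext j
    simp [mul_apply]
  simp only [hrow, det_updateRow_sum, trace, diag, smul_eq_mul, sum_mul]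

theorem HasDerivAt.matrix_det {A : ℝ → Matrix n n ℝ} {A' : Matrix n n ℝ} {t : ℝ}
    (h : HasDerivAt A A' t) :
    HasDerivAt (fun s => (A s).det) (∑ i, ((A t).updateRow i (A' i)).det) t := by
  simp only [det_updateRow_eq_sum]
  simp only [det_eq_sum_perm_prod_row]
  rw [sum_comm]
  refine HasDerivAt.fun_sum fun σ _ => ?_
  rw [← smul_sum]
  refine HasDerivAt.const_smul _ ?_
  simpa [smul_eq_mul] using HasDerivAt.fun_finsetProd (u := univ)
    fun i _ => h.matrix_apply i (σ i)

theorem HasDerivAt.matrix_det_of_eq_mul {A : ℝ → Matrix n n ℝ} {G : Matrix n n ℝ} {t : ℝ}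
    (h : HasDerivAt A (G * A t) t) :
    HasDerivAt (fun s => (A s).det) (G.trace * (A t).det) t :=
  sum_det_updateRow_mul G (A t) ▸ h.matrix_det

end Jacobi

lemma trace_dev (M : Mat) : (dev M).trace = 0 := by
  simp [dev, trace_smul, trace_one]

lemma maxwellRHS_eq_mul (η c10 c01 : ℝ) (C Ci : Mat) :
    maxwellRHS η c10 c01 C Ci =
      ((1 / η) • dev (c10 • (unimod C * Ci⁻¹) - c01 • (Ci * (unimod C)⁻¹))) * Ci :=
  (smul_mul_assoc _ _ _).symm

theorem maxwell_preserves_incompressibility (η c10 c01 : ℝ)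
    (C Ci : ℝ → Mat)
    (hflow : ∀ t, HasDerivAt Ci (maxwellRHS η c10 c01 (C t) (Ci t)) t)
    (h0 : (Ci 0).det = 1) :
    ∀ t, (Ci t).det = 1 := by
  have hdet : ∀ t, HasDerivAt (fun s => (Ci s).det) 0 t := fun t => by
    have h := (maxwellRHS_eq_mul η c10 c01 (C t) (Ci t) ▸ hflow t).matrix_det_of_eq_mul
    simpa only [trace_smul, trace_dev, smul_zero, zero_mul] using h
  intro t
  rw [← h0]
  exact is_const_of_deriv_eq_zero (fun s => (hdet s).differentiableAt)
    (fun s => (hdet s).deriv) t 0
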